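/- (Stationary water balance, finite capacity.) Assume p_0 > 0, p_0 + p_1 < 1, that μ_y := E[Y_0] < ∞, and that Z_0 is distributed according to the unique stationary probability distribution π of the transition matrix P (and is independent of (Y_n)). Then the mean inflow equals the long-run mean controlled release plus the long-run mean overflow loss per unit time: μ_y = ℙ(Z_0 + Y_0 ≥ 1) + E[(Z_0 + Y_0 − C)^+], where x^+ = max(x, 0). -/

import Mathlib

open scoped BigOperators
open MeasureTheory ProbabilityTheory Filter

/-!
Pointwise, `Z 0 + Y 0 = Z 1 + 1{Z 0 + Y 0 ≥ 1} + (Z 0 + Y 0 - C)⁺`: the water present after the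
inflow is either stored, released, or spilled. Since `Z 0` has law `π` and is independent of
`Y 0`, the law of `Z 1` is `π P = π`, so `Z 1` and `Z 0` have the same mean, and taking
expectations in the pointwise identity leaves the balance `E Y 0 = P(release) + E(overflow)`.
-/

/-- Transition matrix of the finite-capacity Moran storage chain on states `{0, …, C-1}`:
`P 0 0 = p 0 + p 1`, `P 0 j = p (j+1)` for `1 ≤ j ≤ C-2`, `P i j = p (j-i+1)` for
`1 ≤ i ≤ C-1` and `i-1 ≤ j ≤ C-2`, `P i j = 0` for `j < i-1`, and
`P i (C-1) = h (C-i)` where `h k = ∑_{j ≥ k} p j`. -/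
noncomputable def moranP (C : ℕ) (p : ℕ → ℝ) : Matrix (Fin C) (Fin C) ℝ :=
  Matrix.of fun i j =>
    if (j : ℕ) = C - 1 then ∑' k : ℕ, p (C - (i : ℕ) + k)
    else if (i : ℕ) = 0 ∧ (j : ℕ) = 0 then p 0 + p 1
    else if (i : ℕ) ≤ (j : ℕ) + 1 then p ((j : ℕ) + 1 - (i : ℕ))
    else 0

def moranStep (C z y : ℕ) : ℕ := min (z + y - 1) (C - 1)

section

variable {Ω : Type*} [MeasurableSpace Ω] {μ : Measure Ω}

lemma identDistrib_of_lt_of_measureReal_eq [IsFiniteMeasure μ] {C : ℕ} {W W' : Ω → ℕ}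
    (hW : Measurable W) (hW' : Measurable W') (hlt : ∀ ω, W ω < C) (hlt' : ∀ ω, W' ω < C)
    (h : ∀ i : Fin C, μ.real {ω | W ω = i} = μ.real {ω | W' ω = i}) :
    IdentDistrib W W' μ μ where
  aemeasurable_fst := hW.aemeasurable
  aemeasurable_snd := hW'.aemeasurable
  map_eq := Measure.ext_of_singleton fun n => by
    rw [Measure.map_apply hW (measurableSet_singleton n),
      Measure.map_apply hW' (measurableSet_singleton n)]
    by_cases hn : n < C
    · exact (ENNReal.toReal_eq_toReal_iff' (measure_ne_top _ _) (measure_ne_top _ _)).mp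
        (h ⟨n, hn⟩)
    · have hempty : ∀ V : Ω → ℕ, (∀ ω, V ω < C) → V ⁻¹' {n} = ∅ := fun V hV =>
        Set.eq_empty_of_forall_notMem fun ω (hω : V ω = n) => hn (hω ▸ hV ω)
      rw [hempty W hlt, hempty W' hlt']

lemma integrable_natCast_of_lt [IsFiniteMeasure μ] {W : Ω → ℕ} {C : ℕ} (hW : Measurable W)
    (hlt : ∀ ω, W ω < C) : Integrable (fun ω => (W ω : ℝ)) μ :=
  .of_bound (measurable_from_top.comp hW).aestronglyMeasurable C
    (ae_of_all _ fun ω => by simpa using (hlt ω).le)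

lemma measureReal_apply_eq_vecMul [IsFiniteMeasure μ] {C : ℕ} {X Y : Ω → ℕ}
    (hX : Measurable X) (hY : Measurable Y) (hXY : IndepFun X Y μ) (hXlt : ∀ ω, X ω < C)
    (f : ℕ → ℕ → ℕ) {π : Fin C → ℝ} {K : Matrix (Fin C) (Fin C) ℝ}
    (hπ : ∀ i : Fin C, μ.real {ω | X ω = i} = π i)
    (hK : ∀ i j : Fin C, μ.real {ω | f i (Y ω) = j} = K i j) (j : Fin C) :
    μ.real {ω | f (X ω) (Y ω) = j} = Matrix.vecMul π K j := by
  have hdecomp : {ω | f (X ω) (Y ω) = j}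
      = ⋃ i : Fin C, X ⁻¹' {(i : ℕ)} ∩ Y ⁻¹' {y | f i y = j} := by
    ext ω
    simp only [Set.mem_ofPred_eq, Set.mem_iUnion, Set.mem_inter_iff, Set.mem_preimage,
      Set.mem_singleton_iff]
    exact ⟨fun h => ⟨⟨X ω, hXlt ω⟩, rfl, h⟩, by rintro ⟨i, hi, h⟩; rwa [hi]⟩
  have hdisj : Pairwise (Function.onFun Disjoint
      fun i : Fin C => X ⁻¹' {(i : ℕ)} ∩ Y ⁻¹' {y | f i y = j}) :=
    fun a b hab => Set.disjoint_left.mpr fun ω ha hb => hab (Fin.ext (ha.1.symm.trans hb.1))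
  rw [hdecomp, measureReal_iUnion_fintype hdisj
    fun i => (hX (measurableSet_singleton _)).inter (hY .of_discrete)]
  refine Finset.sum_congr rfl fun i _ => ?_
  show _ = _ * K i j
  rw [← hπ i, ← hK i j, measureReal_def, measureReal_def, measureReal_def,
    hXY.measure_inter_preimage_eq_mul _ _ (measurableSet_singleton _) .of_discrete,
    ENNReal.toReal_mul]
  rfl

lemma moranP_apply_eq_measureReal [IsFiniteMeasure μ] {C : ℕ} (hC : 2 ≤ C) {p : ℕ → ℝ}
    {Y : Ω → ℕ} (hY : Measurable Y) (hp : ∀ j, μ.real {ω | Y ω = j} = p j) (i j : Fin C) :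
    moranP C p i j = μ.real {ω | moranStep C i (Y ω) = j} := by
  have hi := i.isLt
  simp only [moranP, moranStep, Matrix.of_apply]
  split_ifs with hlast h00 hle
  · have hset : {ω | min (i + Y ω - 1) (C - 1) = j} = ⋃ k, {ω | Y ω = C - i + k} := by
      ext ω
      simp only [Set.mem_ofPred_eq, Set.mem_iUnion]
      exact ⟨fun h => ⟨Y ω - (C - i), by omega⟩, fun ⟨k, hk⟩ => by omega⟩
    have hdisj : Pairwise (Function.onFun Disjoint fun k => {ω | Y ω = C - i + k}) :=
      fun a b hab => Set.disjoint_left.mpr fun ω ha hb => hab (by simp_all)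
    rw [hset, measureReal_def, measure_iUnion hdisj fun k => hY (measurableSet_singleton _),
      ENNReal.tsum_toReal_eq fun _ => measure_ne_top _ _]
    exact tsum_congr fun k => (hp _).symm
  · have hset : {ω | min (i + Y ω - 1) (C - 1) = j} = Y ⁻¹' {0} ∪ Y ⁻¹' {1} := by
      ext ω
      simp only [Set.mem_ofPred_eq, Set.mem_union, Set.mem_preimage, Set.mem_singleton_iff]
      omega
    rw [hset, measureReal_union ((Set.disjoint_singleton.mpr zero_ne_one).preimage Y)
      (hY (measurableSet_singleton _))]
    exact congrArg₂ (· + ·) (hp 0).symm (hp 1).symm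
  · have hset : {ω | min (i + Y ω - 1) (C - 1) = j} = {ω | Y ω = j + 1 - i} := by
      ext ω
      simp only [Set.mem_ofPred_eq]
      omega
    rw [hset, hp]
  · have hset : {ω | min (i + Y ω - 1) (C - 1) = j} = ∅ := by
      ext ω
      simp only [Set.mem_ofPred_eq, Set.mem_empty_iff_false, iff_false]
      omega
    rw [hset, measureReal_empty]

lemma moranStep_lt {C : ℕ} (hC : 0 < C) (z y : ℕ) : moranStep C z y < C := by
  unfold moranStep
  omega

lemma identDistrib_moranStep_of_vecMul_eq [IsFiniteMeasure μ] {C : ℕ} (hC : 2 ≤ C)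
    {p : ℕ → ℝ} {π : Fin C → ℝ} (hπP : Matrix.vecMul π (moranP C p) = π) {X Y : Ω → ℕ}
    (hX : Measurable X) (hY : Measurable Y) (hXY : IndepFun X Y μ) (hXlt : ∀ ω, X ω < C)
    (hπ : ∀ i : Fin C, μ.real {ω | X ω = i} = π i) (hp : ∀ j, μ.real {ω | Y ω = j} = p j) :
    IdentDistrib (fun ω => moranStep C (X ω) (Y ω)) X μ μ := by
  refine identDistrib_of_lt_of_measureReal_eq
    ((measurable_of_countable (Function.uncurry (moranStep C))).comp (hX.prodMk hY)) hX
    (fun ω => moranStep_lt (by omega) _ _) hXlt fun j => ?_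
  rw [hπ, ← hπP]
  exact measureReal_apply_eq_vecMul hX hY hXY hXlt (moranStep C) hπ
    (fun i j => (moranP_apply_eq_measureReal hC hY hp i j).symm) j

lemma moranStep_water_balance {C z y : ℕ} (hz : z < C) :
    (z : ℝ) + y = moranStep C z y + (if 1 ≤ z + y then 1 else 0) + max ((z : ℝ) + y - C) 0 := by
  unfold moranStep
  rcases le_total C (z + y) with h | h
  · have hmin : ((min (z + y - 1) (C - 1) : ℕ) : ℝ) + 1 = C := by
      exact_mod_cast (by omega : min (z + y - 1) (C - 1) + 1 = C)
    have hC : (C : ℝ) ≤ z + y := by exact_mod_cast h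
    rw [if_pos (by omega), max_eq_left (by linarith), hmin]
    ring
  · have hmin : min (z + y - 1) (C - 1) + (if 1 ≤ z + y then 1 else 0) = z + y := by
      split_ifs <;> omega
    have hC : (z : ℝ) + y ≤ C := by exact_mod_cast h
    rw [max_eq_right (by linarith), add_zero]
    exact_mod_cast hmin.symm

end

theorem stmt3_general
    {Ω : Type} [MeasurableSpace Ω] (μ : Measure Ω) [IsProbabilityMeasure μ]
    (C : ℕ) (hC : 2 ≤ C) (p : ℕ → ℝ)
    (Y Z : ℕ → Ω → ℕ)
    (hYmeas : ∀ n, Measurable (Y n)) (hZ0meas : Measurable (Z 0))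
    (hYdist : ∀ n j, (μ {ω | Y n ω = j}).toReal = p j)
    (hIndep : iIndepFun
      (fun i : Option ℕ => i.elim (Z 0) Y) μ)
    (hZ0lt : ∀ ω, Z 0 ω < C)
    (hrec : ∀ n ω, Z (n + 1) ω = min (Z n ω + Y n ω - 1) (C - 1))
    (hYint : Integrable (fun ω => (Y 0 ω : ℝ)) μ)
    (π : Fin C → ℝ)
    (hπP : Matrix.vecMul π (moranP C p) = π)
    (hZ0dist : ∀ i : Fin C, (μ {ω | Z 0 ω = (i : ℕ)}).toReal = π i) :
    ∫ ω, (Y 0 ω : ℝ) ∂μ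
      = (μ {ω | 1 ≤ Z 0 ω + Y 0 ω}).toReal
        + ∫ ω, max ((Z 0 ω : ℝ) + (Y 0 ω : ℝ) - (C : ℝ)) 0 ∂μ := by
  simp only [← measureReal_def] at hYdist hZ0dist ⊢
  have hY0 := hYmeas 0
  have hZ1 : Z 1 = fun ω => moranStep C (Z 0 ω) (Y 0 ω) := funext (hrec 0)
  have hid : IdentDistrib (Z 1) (Z 0) μ μ := hZ1 ▸ identDistrib_moranStep_of_vecMul_eq hC hπP
    hZ0meas hY0 (hIndep.indepFun (i := none) (j := some 0) (by simp)) hZ0lt hZ0dist (hYdist 0)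
  have hZ0int := integrable_natCast_of_lt (μ := μ) hZ0meas hZ0lt
  have hidReal : IdentDistrib (fun ω => (Z 1 ω : ℝ)) (fun ω => (Z 0 ω : ℝ)) μ μ :=
    hid.comp measurable_from_top
  have hZ1int := hidReal.symm.integrable_snd hZ0int
  set S := {ω | 1 ≤ Z 0 ω + Y 0 ω}
  have hS : MeasurableSet S := (hZ0meas.add hY0) .of_discrete
  have hoverflow : ∀ ω, max ((Z 0 ω : ℝ) + Y 0 ω - C) 0
      = Z 0 ω + Y 0 ω - Z 1 ω - S.indicator 1 ω := fun ω => by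
    have := moranStep_water_balance (y := Y 0 ω) (hZ0lt ω)
    rw [congrFun hZ1 ω, Set.indicator_apply]
    simp only [S, Set.mem_ofPred_eq, Pi.one_apply]
    linarith
  have hSint : Integrable (S.indicator (1 : Ω → ℝ)) μ :=
    (integrable_const (1 : ℝ)).indicator hS
  rw [integral_congr_ae (ae_of_all _ hoverflow), integral_sub ?_ hSint,
    integral_sub ?_ hZ1int, integral_add hZ0int hYint, integral_indicator_one hS, hidReal.integral_eq]
  · ring
  · exact hZ0int.add hYint
  · exact (hZ0int.add hYint).sub hZ1int

/-- stationary water balance in the finite-capacity case: if `Z 0` is distributed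
according to the stationary distribution `π`, the mean inflow equals the long-run mean
controlled release plus the long-run mean overflow loss per unit time. -/
theorem stmt3
    {Ω : Type} [MeasurableSpace Ω] (μ : Measure Ω) [IsProbabilityMeasure μ]
    (C : ℕ) (hC : 2 ≤ C) (p : ℕ → ℝ) (hpnn : ∀ j, 0 ≤ p j) (hpsum : HasSum p 1)
    (Y Z : ℕ → Ω → ℕ)
    (hYmeas : ∀ n, Measurable (Y n)) (hZ0meas : Measurable (Z 0))
    (hYdist : ∀ n j, (μ {ω | Y n ω = j}).toReal = p j)
    (hIndep : iIndepFun
      (fun i : Option ℕ => i.elim (Z 0) Y) μ)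
    (hZ0lt : ∀ ω, Z 0 ω < C)
    (hrec : ∀ n ω, Z (n + 1) ω = min (Z n ω + Y n ω - 1) (C - 1))
    (hp0 : 0 < p 0) (hp01 : p 0 + p 1 < 1)
    (hYint : Integrable (fun ω => (Y 0 ω : ℝ)) μ)
    (π : Fin C → ℝ) (hπnn : ∀ i, 0 ≤ π i) (hπ1 : ∑ i, π i = 1)
    (hπP : Matrix.vecMul π (moranP C p) = π)
    (hZ0dist : ∀ i : Fin C, (μ {ω | Z 0 ω = (i : ℕ)}).toReal = π i) :
    ∫ ω, (Y 0 ω : ℝ) ∂μ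
      = (μ {ω | 1 ≤ Z 0 ω + Y 0 ω}).toReal
        + ∫ ω, max ((Z 0 ω : ℝ) + (Y 0 ω : ℝ) - (C : ℝ)) 0 ∂μ :=
  stmt3_general μ C hC p Y Z hYmeas hZ0meas hYdist hIndep hZ0lt hrec hYint π hπP hZ0dist
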